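/- Let K be a field, n ≥ 2 an integer, and let q, z_1, …, z_n ∈ K be nonzero elements such that z_2, …, z_n are pairwise distinct and, for all i, j ∈ {1,…,n}: q²z_i ≠ z_j, q·z_i + z_j ≠ 0, and q³·z_i + z_j ≠ 0. Then for every j ∈ {2,…,n} one has ∑_{k=2}^{n} μ̃_k(z_1;z_2,…,z_n) · 1/(1+q³z_k/z_j) + ∑_{k=2}^{n} ν̃_k(z_1;z_2,…,z_n) · 1/(1−q²z_k/z_j) = 1/(1+q³z_1/z_j). -/

import Mathlib

open Finset

/-- The coefficient function `μ̃_k(t;z_2,…,z_n)` of Khoroshkin–Shapiro. -/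
noncomputable def muTildeKS {K : Type*} [Field K] (n : ℕ) (q : K) (z : ℕ → K) (k : ℕ) (t : K) : K :=
  (∏ i ∈ (Icc 2 n).erase k, (t - z i) / (z k - z i)) *
    ∏ i ∈ Icc 2 n,
      ((q * t + z i) * (q ^ 2 * z k - z i) * (q ^ 3 * z k + z i)) /
        ((q * z k + z i) * (q ^ 2 * t - z i) * (q ^ 3 * t + z i))

/-- The coefficient function `ν̃_k(t;z_2,…,z_n)` of Khoroshkin–Shapiro. -/
noncomputable def nuTildeKS {K : Type*} [Field K] (n : ℕ) (q : K) (z : ℕ → K) (k : ℕ) (t : K) : K :=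
  -q ^ (n - 1) * (∏ i ∈ (Icc 2 n).erase k, (q * t + z i) / (z k - z i)) *
    ∏ i ∈ Icc 2 n,
      ((t - z i) * (q * z k + z i) * (q ^ 2 * z k - z i)) /
        ((z k + q * z i) * (q ^ 2 * t - z i) * (q ^ 3 * t + z i))

/-! Put `t = z_1` and `D(t) = ∏_{i ≥ 2} (q² t - z_i)(q³ t + z_i)`. Then
`D(t) μ̃_k(t) = D(z_k) ℓ_{z_k}(t)` and `D(t) ν̃_k(t) = D(-z_k/q) ℓ_{-z_k/q}(t)`,
where the `ℓ` are the Lagrange basis polynomials for the `2(n-1)` nodes `z_k`, `-z_k/q`; moreover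
`1 - q² z_k / z_j` is `1 + q³ t / z_j` at `t = -z_k/q`. So `D(t)` times the left-hand side is the
Lagrange interpolant of `f(t) = D(t) / (1 + q³ t / z_j)` on these nodes. Since `D` contains the
factor `q³ t + z_j`, `f` is a polynomial of degree `2n - 3`, hence equal to its interpolant. -/

open Polynomial

theorem Lagrange.eval_basis_eq_prod {F ι : Type*} [Field F] [DecidableEq ι] (s : Finset ι)
    (v : ι → F) (i : ι) (t : F) :
    (Lagrange.basis s v i).eval t = ∏ j ∈ s.erase i, (t - v j) / (v i - v j) := by
  simp [Lagrange.basis, Lagrange.basisDivisor, eval_prod, div_eq_inv_mul]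

theorem Finset.prod_erase_inl_disjSum {α β M : Type*} [DecidableEq α] [DecidableEq β]
    [CommMonoid M] (s : Finset α) (t : Finset β) (a : α) (f : α ⊕ β → M) :
    ∏ x ∈ (s.disjSum t).erase (.inl a), f x =
      (∏ x ∈ s.erase a, f (.inl x)) * ∏ x ∈ t, f (.inr x) := by
  rw [prod_sum_eq_prod_toLeft_mul_prod_toRight]
  congr 2 <;> ext <;> simp

theorem Finset.prod_erase_inr_disjSum {α β M : Type*} [DecidableEq α] [DecidableEq β]
    [CommMonoid M] (s : Finset α) (t : Finset β) (b : β) (f : α ⊕ β → M) :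
    ∏ x ∈ (s.disjSum t).erase (.inr b), f x =
      (∏ x ∈ s, f (.inl x)) * ∏ x ∈ t.erase b, f (.inr x) := by
  rw [prod_sum_eq_prod_toLeft_mul_prod_toRight]
  congr 2 <;> ext <;> simp

theorem Polynomial.natDegree_prod_le_card {R ι : Type*} [CommSemiring R] (s : Finset ι)
    (f : ι → R[X]) (h : ∀ i ∈ s, (f i).natDegree ≤ 1) :
    (∏ i ∈ s, f i).natDegree ≤ #s :=
  (natDegree_prod_le s f).trans <| (sum_le_sum h).trans (by simp)

namespace KhoroshkinShapiro

variable {K : Type*} [Field K] (n : ℕ) (q : K) (z : ℕ → K)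

def node : ℕ ⊕ ℕ → K := Sum.elim z fun i => -z i / q

@[simp] theorem node_inl (i : ℕ) : node q z (.inl i) = z i := rfl

@[simp] theorem node_inr (i : ℕ) : node q z (.inr i) = -z i / q := rfl

def denom (t : K) : K := ∏ i ∈ Icc 2 n, (q ^ 2 * t - z i) * (q ^ 3 * t + z i)

noncomputable def numer (j : ℕ) : K[X] :=
  C (z j) * (∏ i ∈ Icc 2 n, (C (q ^ 2) * X - C (z i))) *
    ∏ i ∈ (Icc 2 n).erase j, (C (q ^ 3) * X + C (z i))

theorem muTildeKS_eq (hq : q ≠ 0) (k : ℕ) (t : K) :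
    muTildeKS n q z k t =
      (Lagrange.basis ((Icc 2 n).disjSum (Icc 2 n)) (node q z) (.inl k)).eval t *
        denom n q z (z k) / denom n q z t := by
  simp only [Lagrange.eval_basis_eq_prod, prod_erase_inl_disjSum, node_inl, node_inr]
  rw [denom, denom, mul_assoc, mul_div_assoc, mul_div_assoc, ← prod_div_distrib,
    ← prod_mul_distrib, muTildeKS]
  congr 1
  refine prod_congr rfl fun i _ => ?_
  have hnode : ∀ x, x - -z i / q = (q * x + z i) / q := fun x => by field_simp; ring
  rw [hnode, hnode, div_div_div_cancel_right₀ hq, div_mul_div_comm]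
  ring

theorem nuTildeKS_eq (hq : q ≠ 0) {k : ℕ} (hk : k ∈ Icc 2 n) (t : K) :
    nuTildeKS n q z k t =
      (Lagrange.basis ((Icc 2 n).disjSum (Icc 2 n)) (node q z) (.inr k)).eval t *
        denom n q z (-z k / q) / denom n q z t := by
  obtain ⟨m, rfl⟩ : ∃ m, n = m + 2 := ⟨n - 2, by simp only [mem_Icc] at hk; omega⟩
  have hcard : #(Icc 2 (m + 2)) = m + 1 := by simp
  have hcard_erase : #((Icc 2 (m + 2)).erase k) = m := by rw [card_erase_of_mem hk]; simp
  have hsign : (-1 : K) ^ m * (-q) ^ (m + 1) = -q ^ (m + 1) := by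
    rw [neg_pow q, ← mul_assoc, ← pow_add, Odd.neg_one_pow ⟨m, by ring⟩, neg_one_mul]
  have hleft : ∀ i, (t - -z i / q) / (-z k / q - -z i / q) =
      -1 * ((q * t + z i) / (z k - z i)) := fun i => by
    have ht : t - -z i / q = (q * t + z i) / q := by field_simp; ring
    have hk : -z k / q - -z i / q = -(z k - z i) / q := by ring
    rw [ht, hk, div_div_div_cancel_right₀ hq, div_neg]
    ring
  have hright : ∀ i, (t - z i) / (-z k / q - z i) *
      ((q ^ 2 * (-z k / q) - z i) * (q ^ 3 * (-z k / q) + z i) /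
        ((q ^ 2 * t - z i) * (q ^ 3 * t + z i))) =
      -q * ((t - z i) * (q * z k + z i) * (q ^ 2 * z k - z i) /
        ((z k + q * z i) * (q ^ 2 * t - z i) * (q ^ 3 * t + z i))) := fun i => by
    have h1 : -z k / q - z i = -(z k + q * z i) / q := by field_simp; ring
    have h2 : q ^ 2 * (-z k / q) - z i = -(q * z k + z i) := by field_simp; ring
    have h3 : q ^ 3 * (-z k / q) + z i = -(q ^ 2 * z k - z i) := by field_simp; ring
    rw [h1, h2, h3, div_div_eq_mul_div, div_neg]
    -- splitting every denominator into its factors lets `ring` match the inverses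
    simp only [← div_div]
    ring
  simp only [Lagrange.eval_basis_eq_prod, prod_erase_inr_disjSum, node_inl, node_inr]
  rw [denom, denom, mul_comm (∏ i ∈ Icc 2 (m + 2), _), mul_assoc, mul_div_assoc, mul_div_assoc,
    ← prod_div_distrib, ← prod_mul_distrib, prod_congr rfl fun i _ => hleft i,
    prod_congr rfl fun i _ => hright i, prod_mul_distrib, prod_mul_distrib, prod_const,
    prod_const, hcard_erase, hcard, nuTildeKS, show m + 2 - 1 = m + 1 from rfl, ← hsign]
  ring

theorem injOn_node (hq : q ≠ 0)
    (hdist : ∀ i ∈ Icc 2 n, ∀ j ∈ Icc 2 n, i ≠ j → z i ≠ z j)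
    (hq1 : ∀ i ∈ Icc 2 n, ∀ j ∈ Icc 2 n, q * z i + z j ≠ 0) :
    Set.InjOn (node q z) ((Icc 2 n).disjSum (Icc 2 n)) := by
  rintro (i | i) hi (k | k) hk h <;>
    simp only [mem_coe, inl_mem_disjSum, inr_mem_disjSum, node_inl, node_inr, Sum.inl.injEq,
      Sum.inr.injEq] at hi hk h ⊢
  · exact by_contra fun hik => hdist i hi k hk hik h
  · exact absurd (by rw [h]; field_simp; ring) (hq1 i hi k hk)
  · exact absurd (by rw [← h]; field_simp; ring) (hq1 k hk i hi)
  · exact by_contra fun hik => hdist i hi k hk hik (by field_simp at h; linear_combination -h)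

theorem degree_numer_lt {j : ℕ} (hj : j ∈ Icc 2 n) :
    (numer n q z j).degree < #((Icc 2 n).disjSum (Icc 2 n)) := by
  have hlin : ∀ a b : K, (C a * X - C b).natDegree ≤ 1 := fun a b => by
    rw [sub_eq_add_neg, ← C_neg]; exact natDegree_linear_le
  have hdeg : (numer n q z j).natDegree ≤ #(Icc 2 n) + #((Icc 2 n).erase j) :=
    natDegree_mul_le.trans <| add_le_add
      (natDegree_C_mul_le _ _ |>.trans <| natDegree_prod_le_card _ _ fun i _ => hlin _ _)
      (natDegree_prod_le_card _ _ fun i _ => natDegree_linear_le)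
  have hpos : 0 < #(Icc 2 n) := card_pos.mpr ⟨j, hj⟩
  rw [card_disjSum, card_erase_of_mem hj] at *
  exact degree_lt_iff_coeff_zero _ _ |>.mpr fun d hd => coeff_eq_zero_of_natDegree_lt (by omega)

theorem eval_numer {j : ℕ} (hj : j ∈ Icc 2 n) (hzj : z j ≠ 0) {x : K}
    (hx : q ^ 3 * x + z j ≠ 0) :
    (numer n q z j).eval x = denom n q z x * (1 / (1 + q ^ 3 * x / z j)) := by
  simp only [numer, denom, eval_mul, eval_prod, eval_add, eval_sub, eval_C, eval_X]
  have h : 1 + q ^ 3 * x / z j = (q ^ 3 * x + z j) / z j := by field_simp; ring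
  rw [prod_mul_distrib, ← mul_prod_erase _ (fun i => q ^ 3 * x + z i) hj, h, one_div_div]
  field_simp

end KhoroshkinShapiro

open KhoroshkinShapiro in
theorem weight_function_munu_tilde_second_columns_general
    (K : Type*) [Field K] (n : ℕ) (q : K) (z : ℕ → K)
    (hq : q ≠ 0) (hz : ∀ i ∈ Icc 1 n, z i ≠ 0)
    (hdist : ∀ i ∈ Icc 2 n, ∀ j ∈ Icc 2 n, i ≠ j → z i ≠ z j)
    (hq2 : ∀ i ∈ Icc 1 n, ∀ j ∈ Icc 1 n, q ^ 2 * z i ≠ z j)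
    (hq1 : ∀ i ∈ Icc 1 n, ∀ j ∈ Icc 1 n, q * z i + z j ≠ 0)
    (hq3 : ∀ i ∈ Icc 1 n, ∀ j ∈ Icc 1 n, q ^ 3 * z i + z j ≠ 0) :
    ∀ j ∈ Icc 2 n,
      (∑ k ∈ Icc 2 n, muTildeKS n q z k (z 1) * (1 / (1 + q ^ 3 * z k / z j))) +
      (∑ k ∈ Icc 2 n, nuTildeKS n q z k (z 1) * (1 / (1 - q ^ 2 * z k / z j)))
      = 1 / (1 + q ^ 3 * z 1 / z j) := by
  intro j hj
  have hsub : Icc 2 n ⊆ Icc 1 n := Icc_subset_Icc_left one_le_two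
  have h1 : 1 ∈ Icc 1 n := by simp only [mem_Icc] at hj ⊢; omega
  have hj' := hsub hj
  have hzj := hz j hj'
  have hD : denom n q z (z 1) ≠ 0 := prod_ne_zero_iff.mpr fun i hi =>
    mul_ne_zero (sub_ne_zero.mpr (hq2 1 h1 i (hsub hi))) (hq3 1 h1 i (hsub hi))
  have hinterp := congrArg (eval (z 1)) <| Lagrange.eq_interpolate
    (injOn_node n q z hq hdist fun i hi k hk => hq1 i (hsub hi) k (hsub hk))
    (degree_numer_lt n q z hj)
  simp only [Lagrange.interpolate_apply, sum_disjSum, eval_add, eval_finsetSum, eval_mul, eval_C,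
    node_inl, node_inr] at hinterp
  have hmu : ∀ k ∈ Icc 2 n, muTildeKS n q z k (z 1) * (1 / (1 + q ^ 3 * z k / z j)) =
      (numer n q z j).eval (z k) *
        (Lagrange.basis ((Icc 2 n).disjSum (Icc 2 n)) (node q z) (.inl k)).eval (z 1) /
          denom n q z (z 1) := fun k hk => by
    rw [muTildeKS_eq n q z hq, eval_numer n q z hj hzj (hq3 k (hsub hk) j hj')]
    ring
  have hnu : ∀ k ∈ Icc 2 n, nuTildeKS n q z k (z 1) * (1 / (1 - q ^ 2 * z k / z j)) =
      (numer n q z j).eval (-z k / q) *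
        (Lagrange.basis ((Icc 2 n).disjSum (Icc 2 n)) (node q z) (.inr k)).eval (z 1) /
          denom n q z (z 1) := fun k hk => by
    have hw : q ^ 3 * (-z k / q) + z j = z j - q ^ 2 * z k := by field_simp; ring
    have hw' : 1 + q ^ 3 * (-z k / q) / z j = 1 - q ^ 2 * z k / z j := by field_simp; ring
    rw [nuTildeKS_eq n q z hq hk, eval_numer n q z hj hzj
      (hw ▸ sub_ne_zero.mpr (hq2 k (hsub hk) j hj').symm), hw']
    ring
  rw [sum_congr rfl hmu, sum_congr rfl hnu, ← sum_div, ← sum_div, ← add_div, ← hinterp,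
    eval_numer n q z hj hzj (hq3 1 h1 j hj'), mul_div_cancel_left₀ _ hD]

/-- Khoroshkin–Shapiro: second family of columns of the linear system for `μ̃, ν̃`,
the `P⁻`-analogue of Proposition 8, used in the proof of Theorem 3. -/
theorem weight_function_munu_tilde_second_columns
    (K : Type*) [Field K] (n : ℕ) (hn : 2 ≤ n) (q : K) (z : ℕ → K)
    (hq : q ≠ 0) (hz : ∀ i ∈ Icc 1 n, z i ≠ 0)
    (hdist : ∀ i ∈ Icc 2 n, ∀ j ∈ Icc 2 n, i ≠ j → z i ≠ z j)
    (hq2 : ∀ i ∈ Icc 1 n, ∀ j ∈ Icc 1 n, q ^ 2 * z i ≠ z j)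
    (hq1 : ∀ i ∈ Icc 1 n, ∀ j ∈ Icc 1 n, q * z i + z j ≠ 0)
    (hq3 : ∀ i ∈ Icc 1 n, ∀ j ∈ Icc 1 n, q ^ 3 * z i + z j ≠ 0) :
    ∀ j ∈ Icc 2 n,
      (∑ k ∈ Icc 2 n, muTildeKS n q z k (z 1) * (1 / (1 + q ^ 3 * z k / z j))) +
      (∑ k ∈ Icc 2 n, nuTildeKS n q z k (z 1) * (1 / (1 - q ^ 2 * z k / z j)))
      = 1 / (1 + q ^ 3 * z 1 / z j) :=
  weight_function_munu_tilde_second_columns_general K n q z hq hz hdist hq2 hq1 hq3
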